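/- Let X and Y be Banach spaces with Y a Gelfand-Phillips space. Then a bounded linear operator T : X → Y is a weak* Dunford-Pettis operator if and only if it is a Dunford-Pettis operator. -/

import Mathlib

open Filter Topology

/-- A sequence in a normed space is weakly null if every continuous linear functional
sends it to a null sequence. -/
def WeaklyNull {E : Type*} [NormedAddCommGroup E] [NormedSpace ℝ E] (x : ℕ → E) : Prop :=
  ∀ f : E →L[ℝ] ℝ, Tendsto (fun n => f (x n)) atTop (𝓝 0)

/-- A sequence of continuous linear functionals is weak* null if it converges to zero
pointwise. -/
def WeakStarNull {F : Type*} [NormedAddCommGroup F] [NormedSpace ℝ F]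
    (f : ℕ → F →L[ℝ] ℝ) : Prop :=
  ∀ y : F, Tendsto (fun n => f n y) atTop (𝓝 0)

/-- A bounded linear operator `T : E → F` is a weak* Dunford-Pettis operator if
`f_n (T x_n) → 0` whenever `(x_n)` is weakly null in `E` and `(f_n)` is weak* null in `F*`. -/
def IsWeakStarDunfordPettis {E F : Type*} [NormedAddCommGroup E] [NormedSpace ℝ E]
    [NormedAddCommGroup F] [NormedSpace ℝ F] (T : E →L[ℝ] F) : Prop :=
  ∀ (x : ℕ → E) (f : ℕ → F →L[ℝ] ℝ), WeaklyNull x → WeakStarNull f →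
    Tendsto (fun n => f n (T (x n))) atTop (𝓝 0)

/-- A bounded linear operator `T : X → Y` is a Dunford-Pettis operator if it maps weakly
null sequences to norm null sequences. -/
def IsDunfordPettisOp {X Y : Type*} [NormedAddCommGroup X] [NormedSpace ℝ X]
    [NormedAddCommGroup Y] [NormedSpace ℝ Y] (T : X →L[ℝ] Y) : Prop :=
  ∀ x : ℕ → X, WeaklyNull x → Tendsto (fun n => ‖T (x n)‖) atTop (𝓝 0)

/-- A norm bounded set `A ⊆ Y` is limited if every weak* null sequence in `Y*` converges
to zero uniformly on `A`. -/
def IsLimitedSet {Y : Type*} [NormedAddCommGroup Y] [NormedSpace ℝ Y] (A : Set Y) : Prop :=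
  Bornology.IsBounded A ∧
    ∀ g : ℕ → Y →L[ℝ] ℝ, WeakStarNull g →
      ∀ ε > (0 : ℝ), ∃ N : ℕ, ∀ n ≥ N, ∀ y ∈ A, |g n y| ≤ ε

/-- A Banach space is a Gelfand-Phillips space if every limited subset is relatively
(norm) compact. -/
def GelfandPhillips (Y : Type*) [NormedAddCommGroup Y] [NormedSpace ℝ Y] : Prop :=
  ∀ A : Set Y, IsLimitedSet A → IsCompact (closure A)

/-! A weak* Dunford-Pettis operator `T` maps a weakly null sequence `(x_m)` onto a limited set:
if some weak* null `(g_n)` failed to be uniformly small on `{T x_m}`, pointwise convergence forces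
the witnesses `m` to escape every finite set, which yields a diagonal `g_{n_j}(T x_{m_j}) ↛ 0` with
`(x_{m_j})` weakly null and `(g_{n_j})` weak* null. In a Gelfand-Phillips space this set is
relatively compact, and a weakly null sequence with relatively compact range is norm null, its only
possible cluster point being `0`. Conversely, weak* null sequences are bounded, so a Dunford-Pettis
operator is weak* Dunford-Pettis. -/

section UniformConvergence

variable {α : Type*} [PseudoMetricSpace α]

theorem tendstoUniformly_of_tendsto_of_tendsto_dist_comp {F : ℕ → ℕ → α} {f : ℕ → α}
    (hpt : ∀ m, Tendsto (F · m) atTop (𝓝 (f m)))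
    (hdiag : ∀ φ ψ : ℕ → ℕ, Tendsto φ atTop atTop → Tendsto ψ atTop atTop →
      Tendsto (fun j => dist (f (ψ j)) (F (φ j) (ψ j))) atTop (𝓝 0)) :
    TendstoUniformly F f atTop := by
  rw [Metric.tendstoUniformly_iff]
  intro ε hε
  by_contra hfail
  obtain ⟨φ, hφ, hbad⟩ := extraction_of_frequently_atTop (not_eventually.1 hfail)
  simp only [not_forall, not_lt] at hbad
  choose ψ hψ using hbad
  have hψ_tendsto : Tendsto ψ atTop atTop := by
    refine tendsto_atTop.2 fun B => ?_
    have hsmall : ∀ᶠ j in atTop, ∀ m ∈ Finset.range B, dist (f m) (F (φ j) m) < ε :=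
      hφ.tendsto_atTop.eventually <| (Finset.range B).eventually_all.2 fun m _ =>
        (hpt m).eventually (Metric.ball_mem_nhds _ hε) |>.mono fun _ => Metric.mem_ball'.1
    filter_upwards [hsmall] with j hj
    by_contra hlt
    exact (hψ j).not_gt (hj (ψ j) (Finset.mem_range.2 (not_le.1 hlt)))
  obtain ⟨j, hj⟩ := ((hdiag φ ψ hφ.tendsto_atTop hψ_tendsto).eventually (gt_mem_nhds hε)).exists
  exact (hψ j).not_gt hj

end UniformConvergence

section Banach

variable {E F : Type*} [NormedAddCommGroup E] [NormedSpace ℝ E]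
  [NormedAddCommGroup F] [NormedSpace ℝ F]

theorem WeaklyNull.comp_tendsto {x : ℕ → E} (hx : WeaklyNull x) {φ : ℕ → ℕ}
    (hφ : Tendsto φ atTop atTop) : WeaklyNull (x ∘ φ) :=
  fun f => (hx f).comp hφ

theorem WeakStarNull.comp_tendsto {f : ℕ → F →L[ℝ] ℝ} (hf : WeakStarNull f) {φ : ℕ → ℕ}
    (hφ : Tendsto φ atTop atTop) : WeakStarNull (f ∘ φ) :=
  fun y => (hf y).comp hφ

theorem WeaklyNull.map {x : ℕ → E} (hx : WeaklyNull x) (T : E →L[ℝ] F) : WeaklyNull (T ∘ x) :=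
  fun f => hx (f.comp T)

theorem WeaklyNull.exists_norm_le {x : ℕ → E} (hx : WeaklyNull x) : ∃ C, ∀ n, ‖x n‖ ≤ C := by
  obtain ⟨C, hC⟩ := banach_steinhaus (g := fun n => NormedSpace.inclusionInDoubleDual ℝ E (x n))
    fun f => by simpa [bddAbove_def] using (hx f).norm.bddAbove_range
  exact ⟨C, fun n => (NormedSpace.inclusionInDoubleDualLi ℝ).norm_map (x n) ▸ hC n⟩

theorem WeakStarNull.exists_norm_le [CompleteSpace F] {f : ℕ → F →L[ℝ] ℝ} (hf : WeakStarNull f) :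
    ∃ C, ∀ n, ‖f n‖ ≤ C :=
  banach_steinhaus fun y => by simpa [bddAbove_def] using (hf y).norm.bddAbove_range

theorem WeaklyNull.tendsto_zero_of_isCompact_closure {x : ℕ → E} (hx : WeaklyNull x)
    (hK : IsCompact (closure (Set.range x))) : Tendsto x atTop (𝓝 0) := by
  refine hK.tendsto_nhds_of_unique_mapClusterPt
    (Eventually.of_forall fun n => subset_closure (Set.mem_range_self n)) fun a _ ha => ?_
  refine SeparatingDual.eq_zero_of_forall_dual_eq_zero (R := ℝ) fun f => ?_
  have hcluster : ClusterPt (f a) (𝓝 0) :=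
    (ha.continuousAt_comp f.continuous.continuousAt).clusterPt.mono (hx f)
  by_contra hne
  exact clusterPt_iff_not_disjoint.1 hcluster (disjoint_nhds_nhds.2 hne)

theorem IsWeakStarDunfordPettis.isLimitedSet_range {T : E →L[ℝ] F}
    (hT : IsWeakStarDunfordPettis T) {x : ℕ → E} (hx : WeaklyNull x) :
    IsLimitedSet (Set.range (T ∘ x)) := by
  refine ⟨?_, fun g hg ε hε => ?_⟩
  · obtain ⟨C, hC⟩ := (hx.map T).exists_norm_le
    exact isBounded_iff_forall_norm_le.2 ⟨C, Set.forall_mem_range.2 hC⟩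
  have hunif : TendstoUniformly (fun n m => g n (T (x m))) 0 atTop :=
    tendstoUniformly_of_tendsto_of_tendsto_dist_comp (fun m => hg _) fun φ ψ hφ hψ =>
      by simpa using (hT _ _ (hx.comp_tendsto hψ) (hg.comp_tendsto hφ)).abs
  obtain ⟨N, hN⟩ := eventually_atTop.1 (Metric.tendstoUniformly_iff.1 hunif ε hε)
  refine ⟨N, fun n hn => Set.forall_mem_range.2 fun m => ?_⟩
  simpa [abs_sub_comm] using (hN n hn m).le

theorem IsDunfordPettisOp.isWeakStarDunfordPettis [CompleteSpace F] {T : E →L[ℝ] F}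
    (hT : IsDunfordPettisOp T) : IsWeakStarDunfordPettis T := by
  intro x f hx hf
  obtain ⟨C, hC⟩ := hf.exists_norm_le
  exact (tendsto_zero_iff_norm_tendsto_zero.2 (hT x hx)).op_zero_isBoundedUnder_le
    (isBoundedUnder_of ⟨C, hC⟩) (fun y g => g y) fun y g => (g.le_opNorm y).trans_eq (mul_comm _ _)

end Banach

theorem weakStarDunfordPettis_iff_dunfordPettis_of_gelfandPhillips_general
    {X Y : Type*}
    [NormedAddCommGroup X] [NormedSpace ℝ X]
    [NormedAddCommGroup Y] [NormedSpace ℝ Y] [CompleteSpace Y]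
    (hY : GelfandPhillips Y)
    (T : X →L[ℝ] Y) :
    IsWeakStarDunfordPettis T ↔ IsDunfordPettisOp T := by
  refine ⟨fun hT x hx => ?_, IsDunfordPettisOp.isWeakStarDunfordPettis⟩
  exact tendsto_zero_iff_norm_tendsto_zero.1 <|
    (hx.map T).tendsto_zero_of_isCompact_closure (hY _ (hT.isLimitedSet_range hx))

/-- If `Y` is a Gelfand-Phillips space, then a bounded linear operator `T : X → Y` is
weak* Dunford-Pettis iff it is Dunford-Pettis. -/
theorem weakStarDunfordPettis_iff_dunfordPettis_of_gelfandPhillips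
    {X Y : Type*}
    [NormedAddCommGroup X] [NormedSpace ℝ X] [CompleteSpace X]
    [NormedAddCommGroup Y] [NormedSpace ℝ Y] [CompleteSpace Y]
    (hY : GelfandPhillips Y)
    (T : X →L[ℝ] Y) :
    IsWeakStarDunfordPettis T ↔ IsDunfordPettisOp T :=
  weakStarDunfordPettis_iff_dunfordPettis_of_gelfandPhillips_general hY T
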